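/- Let L be a field and D a geometrically integral L-algebra of transcendence degree 1 over L which is finitely generated over L. If D admits a non-trivial exponential map, then D is isomorphic as an L-algebra to the polynomial ring in one variable over L. -/

import Mathlib

open Polynomial

/-- A `k`-algebra homomorphism `φ : A → A[U]` is an *exponential map* if evaluating `U` at `0`
gives the identity and `φ_V φ_U = φ_{V+U}` (comultiplicativity). -/
def IsExponentialMap {k A : Type*} [CommSemiring k] [CommSemiring A] [Algebra k A]
    (φ : A →ₐ[k] A[X]) : Prop :=
  (∀ a : A, (φ a).eval 0 = a) ∧
  (∀ a : A, (φ a).map (φ : A →+* A[X]) =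
      (φ a).eval₂ ((C : A[X] →+* A[X][X]).comp (C : A →+* A[X])) (C X + X))

/-- The ring of invariants `A^φ = {a ∈ A | φ(a) = a}` of a `k`-algebra map `φ : A → A[U]`,
as a subalgebra of `A`. -/
def expInv {k A : Type*} [CommSemiring k] [CommSemiring A] [Algebra k A]
    (φ : A →ₐ[k] A[X]) : Subalgebra k A where
  carrier := {a | φ a = C a}
  mul_mem' := fun {a b} ha hb => by
    simp only [Set.mem_setOf_eq] at *
    rw [map_mul, ha, hb, ← C_mul]
  add_mem' := fun {a b} ha hb => by
    simp only [Set.mem_setOf_eq] at *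
    rw [map_add, ha, hb, ← C_add]
  algebraMap_mem' := fun r => by
    simp only [Set.mem_setOf_eq, AlgHom.commutes, Polynomial.algebraMap_apply]

/-- An exponential map is non-trivial if its ring of invariants is a proper subring. -/
def IsNontrivialExpMap {k A : Type*} [CommSemiring k] [CommSemiring A] [Algebra k A]
    (φ : A →ₐ[k] A[X]) : Prop :=
  IsExponentialMap φ ∧ expInv φ ≠ ⊤

/-- The Derksen invariant: the `k`-subalgebra of `A` generated by the invariants of all
non-trivial exponential maps on `A`. -/
def DerksenInvariant (k A : Type*) [CommSemiring k] [CommSemiring A] [Algebra k A] :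
    Subalgebra k A :=
  Algebra.adjoin k {a : A | ∃ φ : A →ₐ[k] A[X], IsNontrivialExpMap φ ∧ a ∈ expInv φ}

/-- The transcendence degree of a commutative `k`-algebra `A`: the supremum of the
cardinalities of algebraically independent subsets of `A`. -/
noncomputable def trdeg (k A : Type*) [CommRing k] [CommRing A] [Algebra k A] : Cardinal :=
  ⨆ s : {s : Set A // AlgebraicIndependent k ((↑) : s → A)}, Cardinal.mk s.1

/-!
Invariants of `φ` are algebraic over `L`: an element moved by `φ` stays transcendental over the
invariants, so a transcendental invariant would give two algebraically independent elements.
Geometric integrality makes `L` algebraically closed in `D`, hence the invariants, and in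
particular all leading coefficients of the `φ x`, lie in `L`. Comparing coefficients in
`φ_V φ_U = φ_{V+U}` shows that the coefficients of `φ x` realise every `U`-degree `i` with
`(deg φ x).choose i ≠ 0` in `D`; by Lucas' theorem the minimal positive degree, attained by some
`t`, then divides all degrees. Subtracting scalar multiples of powers of `t` lowers degrees down
to the invariants, so `D = L[t]` with `t` transcendental.
-/

open TensorProduct

section GeometricallyIntegral

variable {L D K : Type*} [Field L] [CommRing D] [Algebra L D] [Field K] [Algebra L K]

theorem isDomain_of_isDomain_tensorProduct (h : IsDomain (D ⊗[L] K)) : IsDomain D :=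
  (Algebra.TensorProduct.includeLeft_injective (S := L) (algebraMap L K).injective).isDomain
    (Algebra.TensorProduct.includeLeft : D →ₐ[L] D ⊗[L] K).toRingHom

theorem mem_bot_of_isAlgebraic_of_isDomain_tensorProduct [IsAlgClosed K]
    (h : IsDomain (D ⊗[L] K)) {x : D} (hx : IsAlgebraic L x) : x ∈ (⊥ : Subalgebra L D) := by
  -- `x ⊗ 1` is a root of `minpoly L x`, which splits into linear factors over `K`.
  obtain ⟨r, hr⟩ : x ⊗ₜ[L] (1 : K) ∈
      (Algebra.TensorProduct.includeRight : K →ₐ[L] D ⊗[L] K).toRingHom.range := by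
    refine (IsAlgClosed.splits ((minpoly L x).map (algebraMap L K))).mem_range_of_isRoot
      (Polynomial.map_ne_zero (minpoly.ne_zero hx.isIntegral)) ?_
    rw [Polynomial.map_map, IsRoot, AlgHom.toRingHom_eq_coe, AlgHom.comp_algebraMap,
      eval_map_algebraMap, ← Algebra.TensorProduct.includeLeft_apply (S := L),
      aeval_algHom_apply, minpoly.aeval, map_zero]
  obtain ⟨ℓ, hℓ⟩ := (Algebra.linearMap L K).exists_leftInverse_of_injective
    (LinearMap.ker_eq_bot.2 (algebraMap L K).injective)
  have hℓ1 : ℓ 1 = 1 := by simpa using LinearMap.congr_fun hℓ 1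
  have := congrArg ((TensorProduct.rid L D).toLinearMap ∘ₗ ℓ.lTensor D) hr
  simp only [AlgHom.toRingHom_eq_coe, RingHom.coe_coe, Algebra.TensorProduct.includeRight_apply,
    LinearMap.coe_comp, Function.comp_apply, LinearMap.lTensor_tmul, LinearEquiv.coe_coe,
    TensorProduct.rid_tmul, hℓ1, one_smul] at this
  exact ⟨ℓ r, (Algebra.algebraMap_eq_smul_one _).trans this⟩

end GeometricallyIntegral

theorem choose_pow_mul_cast_ne_zero {R : Type*} [AddMonoidWithOne R] {p : ℕ} [CharP R p]
    [Fact p.Prime] {u : ℕ} (hu : ¬ p ∣ u) (v : ℕ) :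
    ((p ^ v * u).choose (p ^ v) : R) ≠ 0 := by
  rw [Ne, CharP.cast_eq_zero_iff R p]
  have := Choose.choose_pow_mul_pow_mul_modEq_choose_nat (p := p) (k := v) (a := u) (b := 1)
  rw [mul_one, Nat.choose_one_right] at this
  rwa [this.dvd_iff dvd_rfl]

theorem dvd_of_isLeast_of_choose_ne_zero_mem {R : Type*} [NonAssocSemiring R] [NoZeroDivisors R]
    [Nontrivial R] {S : Set ℕ}
    (hS : ∀ m ∈ S, ∀ i, 0 < i → i ≤ m → (m.choose i : R) ≠ 0 → i ∈ S) {n : ℕ}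
    (hn : IsLeast {m ∈ S | 0 < m} n) {m : ℕ} (hm : m ∈ S) : n ∣ m := by
  rcases Nat.eq_zero_or_pos m with rfl | hm0
  · exact dvd_zero n
  rcases CharP.char_is_prime_or_zero R (ringChar R) with hp | hp
  · have : Fact (ringChar R).Prime := ⟨hp⟩
    set p := ringChar R
    have key : ∀ m ∈ S, 0 < m → ∃ v u, m = p ^ v * u ∧ n ≤ p ^ v := by
      intro m hm hm0
      obtain ⟨v, u, hu, rfl⟩ := Nat.exists_eq_pow_mul_and_not_dvd hm0.ne' p hp.ne_one
      refine ⟨v, u, rfl, hn.2 ⟨hS _ hm _ (pow_pos hp.pos v) (Nat.le_of_dvd hm0 ⟨u, rfl⟩)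
        (choose_pow_mul_cast_ne_zero hu v), pow_pos hp.pos v⟩⟩
    obtain ⟨a, u₀, hn_eq, hna⟩ := key n hn.1.1 hn.1.2
    have hn_pow : n = p ^ a := le_antisymm hna (Nat.le_of_dvd hn.1.2 ⟨u₀, hn_eq⟩)
    obtain ⟨v, u, rfl, hnv⟩ := key m hm hm0
    rw [hn_pow] at hnv ⊢
    exact (Nat.pow_dvd_pow p ((Nat.pow_le_pow_iff_right hp.one_lt).1 hnv)).mul_right u
  · have h1 : 1 ∈ S := hS m hm 1 one_pos hm0 <| by
      rw [Nat.choose_one_right, Ne, ringChar.spec, hp, zero_dvd_iff]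
      exact hm0.ne'
    rw [le_antisymm (hn.2 ⟨h1, one_pos⟩) hn.1.2]
    exact one_dvd m

theorem Polynomial.natDegree_sub_lt_of_leadingCoeff_eq {R : Type*} [Ring R] {p q : R[X]}
    (hd : p.natDegree = q.natDegree) (hp : 0 < p.natDegree)
    (hlc : p.leadingCoeff = q.leadingCoeff) : (p - q).natDegree < p.natDegree := by
  by_cases hpq : p - q = 0
  · rwa [hpq, natDegree_zero]
  have hp0 : p ≠ 0 := ne_zero_of_natDegree_gt hp
  have hq0 : q ≠ 0 := ne_zero_of_natDegree_gt (hd ▸ hp)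
  refine natDegree_lt_natDegree hpq (degree_sub_lt_left ?_ hp0 hlc)
  rw [degree_eq_natDegree hp0, degree_eq_natDegree hq0, hd]

theorem isAlgebraic_of_trdeg_le_one {R A : Type*} [CommRing R] [Nontrivial R] [CommRing A]
    [NoZeroDivisors A] [Algebra R A] (htd : Algebra.trdeg R A ≤ 1) {b w : A}
    (hw : Transcendental (Algebra.adjoin R {b}) w) : IsAlgebraic R b := by
  by_contra hb
  have hbasis := (algebraicIndependent_unique_type_iff.2 hb :
    AlgebraicIndependent R fun _ : PUnit => b).isTranscendenceBasis_of_trdeg_le_of_finite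
      (by simpa using htd)
  have := hbasis.isAlgebraic
  rw [Set.range_const] at this
  exact hw (Algebra.IsAlgebraic.isAlgebraic w)

namespace IsExponentialMap

section CommSemiring

variable {k A : Type*} [CommSemiring k] [CommSemiring A] [Algebra k A] {φ : A →ₐ[k] A[X]}

theorem mem_expInv_iff_natDegree_eq_zero (hφ : IsExponentialMap φ) {a : A} :
    a ∈ expInv φ ↔ (φ a).natDegree = 0 := by
  refine ⟨fun h => (congrArg natDegree h).trans (natDegree_C a), fun h => ?_⟩
  show φ a = C a
  rw [eq_C_of_natDegree_eq_zero h, coeff_zero_eq_eval_zero, hφ.1 a]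

theorem apply_coeff (hφ : IsExponentialMap φ) (a : A) (i : ℕ) :
    φ ((φ a).coeff i) = ∑ j ∈ Finset.range ((φ a).natDegree + 1),
      C ((j.choose i : A) * (φ a).coeff j) * X ^ (j - i) := by
  have h := congrArg (fun q => q.coeff i) (hφ.2 a)
  simp only [coeff_map, eval₂_eq_sum_range, finsetSum_coeff] at h
  refine h.trans (Finset.sum_congr rfl fun j _ => ?_)
  rw [RingHom.comp_apply, coeff_C_mul, add_comm (C X) X, coeff_X_add_C_pow, map_mul,
    ← C_eq_natCast]
  ring

theorem leadingCoeff_mem_expInv (hφ : IsExponentialMap φ) (a : A) :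
    (φ a).leadingCoeff ∈ expInv φ := by
  show φ _ = C _
  rw [leadingCoeff, hφ.apply_coeff a, Finset.sum_eq_single (φ a).natDegree]
  · simp
  · intro j hj hne
    rw [Nat.choose_eq_zero_of_lt (by simp at hj; omega)]
    simp
  · simp

theorem natDegree_apply_coeff_natDegree_sub (hφ : IsExponentialMap φ) {a : A} {i : ℕ}
    (hi : 0 < i) (him : i ≤ (φ a).natDegree)
    (hne : ((φ a).natDegree.choose i : A) * (φ a).leadingCoeff ≠ 0) :
    (φ ((φ a).coeff ((φ a).natDegree - i))).natDegree = i := by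
  set m := (φ a).natDegree
  have hcoeff : (φ ((φ a).coeff (m - i))).coeff i = (m.choose i : A) * (φ a).leadingCoeff := by
    rw [hφ.apply_coeff, finsetSum_coeff, Finset.sum_eq_single m, coeff_C_mul, coeff_X_pow,
      if_pos (by omega), mul_one, Nat.choose_symm him, leadingCoeff]
    · intro j hj hne
      rw [coeff_C_mul, coeff_X_pow, if_neg (by simp at hj; omega), mul_zero]
    · simp [m]
  refine le_antisymm ?_ (le_natDegree_of_ne_zero (hcoeff ▸ hne))
  rw [hφ.apply_coeff]
  refine natDegree_sum_le_of_forall_le _ _ fun j hj => ?_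
  exact (natDegree_C_mul_X_pow_le _ _).trans (by simp at hj; omega)

end CommSemiring

section CommRing

variable {k A : Type*} [CommRing k] [CommRing A] [IsDomain A] [Algebra k A]
  {φ : A →ₐ[k] A[X]}

theorem transcendental_of_notMem_expInv (hφ : IsExponentialMap φ) {R : Type*} [CommRing R]
    [Algebra R A] (hR : Function.Injective (algebraMap R A))
    (hRφ : ∀ r : R, algebraMap R A r ∈ expInv φ) {w : A} (hw : w ∉ expInv φ) :
    Transcendental R w := by
  rintro ⟨P, hP0, hPw⟩
  have hcomp : (P.map (algebraMap R A)).comp (φ w) = 0 := by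
    have hφR : (φ : A →+* A[X]).comp (algebraMap R A) = C.comp (algebraMap R A) :=
      RingHom.ext hRφ
    have h := congrArg (φ : A →+* A[X]) hPw
    rwa [aeval_def, hom_eval₂, map_zero, hφR, ← eval₂_map] at h
  rcases comp_eq_zero_iff.1 hcomp with h | ⟨-, h⟩
  · exact hP0 ((Polynomial.map_eq_zero_iff hR).1 h)
  · exact hw (hφ.mem_expInv_iff_natDegree_eq_zero.2 (h ▸ natDegree_C _))

theorem isAlgebraic_of_mem_expInv [Nontrivial k] (hφ : IsExponentialMap φ)
    (htd : Algebra.trdeg k A ≤ 1) (hnt : expInv φ ≠ ⊤) {b : A} (hb : b ∈ expInv φ) :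
    IsAlgebraic k b := by
  obtain ⟨w, hw⟩ := SetLike.exists_not_mem_of_ne_top _ hnt
  refine isAlgebraic_of_trdeg_le_one htd (w := w)
    (hφ.transcendental_of_notMem_expInv Subtype.val_injective (fun r => ?_) hw)
  exact Algebra.adjoin_le (Set.singleton_subset_iff.2 hb) r.2

theorem exists_natDegree_dvd (hφ : IsExponentialMap φ) (hnt : expInv φ ≠ ⊤) :
    ∃ t, 0 < (φ t).natDegree ∧ ∀ x, (φ t).natDegree ∣ (φ x).natDegree := by
  set S := Set.range fun x => (φ x).natDegree
  have hS : ∀ m ∈ S, ∀ i, 0 < i → i ≤ m → (m.choose i : A) ≠ 0 → i ∈ S := by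
    rintro _ ⟨a, rfl⟩ i hi him hne
    have ha : φ a ≠ 0 := fun h => by simp [h] at him; omega
    exact ⟨_, hφ.natDegree_apply_coeff_natDegree_sub hi him
      (mul_ne_zero hne (leadingCoeff_ne_zero.2 ha))⟩
  obtain ⟨w, hw⟩ := SetLike.exists_not_mem_of_ne_top _ hnt
  have hn := isLeast_csInf (s := {m ∈ S | 0 < m})
    ⟨_, ⟨w, rfl⟩, Nat.pos_of_ne_zero (mt hφ.mem_expInv_iff_natDegree_eq_zero.2 hw)⟩
  obtain ⟨⟨t, ht⟩, htpos⟩ := hn.1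
  rw [← ht] at hn htpos
  exact ⟨t, htpos, fun x => dvd_of_isLeast_of_choose_ne_zero_mem hS hn ⟨x, rfl⟩⟩

end CommRing

theorem adjoin_singleton_eq_top {k A : Type*} [Field k] [CommRing A] [IsDomain A] [Algebra k A]
    {φ : A →ₐ[k] A[X]} (hφ : IsExponentialMap φ) (hinv : expInv φ = ⊥) {t : A}
    (ht : 0 < (φ t).natDegree) (hdvd : ∀ x, (φ t).natDegree ∣ (φ x).natDegree) :
    Algebra.adjoin k {t} = ⊤ := by
  have hlc : ∀ x, 0 < (φ x).natDegree →
      ∃ c : k, c ≠ 0 ∧ algebraMap k A c = (φ x).leadingCoeff := by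
    intro x hx
    obtain ⟨c, hc⟩ := Algebra.mem_bot.1 (hinv ▸ hφ.leadingCoeff_mem_expInv x)
    refine ⟨c, ?_, hc⟩
    rintro rfl
    rw [map_zero, eq_comm, leadingCoeff_eq_zero] at hc
    simp [hc] at hx
  obtain ⟨c, hc0, hc⟩ := hlc t ht
  refine eq_top_iff.2 fun x _ => ?_
  induction hx : (φ x).natDegree using Nat.strong_induction_on generalizing x with
  | _ n ih =>
  by_cases hn : n = 0
  · have hx0 : x ∈ expInv φ := hφ.mem_expInv_iff_natDegree_eq_zero.2 (hx.trans hn)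
    rw [hinv] at hx0
    exact (bot_le : ⊥ ≤ Algebra.adjoin k {t}) hx0
  obtain ⟨q, hq⟩ := hdvd x
  obtain ⟨a, ha0, ha⟩ := hlc x (hx ▸ Nat.pos_of_ne_zero hn)
  set y := x - algebraMap k A (a / c ^ q) * t ^ q
  have hlt : (φ y).natDegree < n := by
    have hcq : algebraMap k A (a / c ^ q) ≠ 0 :=
      (_root_.map_ne_zero _).2 (div_ne_zero ha0 (pow_ne_zero q hc0))
    have hy : φ y = φ x - C (algebraMap k A (a / c ^ q)) * φ t ^ q := by
      rw [map_sub, map_mul, map_pow, AlgHom.commutes, Polynomial.algebraMap_apply]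
    rw [hy, ← hx]
    refine natDegree_sub_lt_of_leadingCoeff_eq ?_ (hx ▸ Nat.pos_of_ne_zero hn) ?_
    · rw [natDegree_C_mul hcq, natDegree_pow, hq, mul_comm]
    · rw [leadingCoeff_mul, leadingCoeff_C, leadingCoeff_pow, ← hc, ← ha, ← map_pow, ← map_mul,
        div_mul_cancel₀ _ (pow_ne_zero q hc0)]
  have hxy : x = y + algebraMap k A (a / c ^ q) * t ^ q := by ring
  rw [hxy]
  exact add_mem (ih _ hlt y trivial rfl) (mul_mem (Subalgebra.algebraMap_mem _ _)
    (pow_mem (Algebra.self_mem_adjoin_singleton k t) q))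

end IsExponentialMap

theorem geometrically_integral_trdeg_one_general {L D : Type} [Field L] [CommRing D]
    [Algebra L D]
    (hgi : IsDomain (TensorProduct L D (AlgebraicClosure L)))
    (htd : trdeg L D = 1)
    (φ : D →ₐ[L] D[X]) (hφ : IsExponentialMap φ) (hnt : expInv φ ≠ ⊤) :
    Nonempty (D ≃ₐ[L] Polynomial L) := by
  have : IsDomain D := isDomain_of_isDomain_tensorProduct hgi
  have hinv : expInv φ = ⊥ := eq_bot_iff.2 fun b hb =>
    mem_bot_of_isAlgebraic_of_isDomain_tensorProduct hgi
      (hφ.isAlgebraic_of_mem_expInv htd.le hnt hb)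
  obtain ⟨t, ht, hdvd⟩ := hφ.exists_natDegree_dvd hnt
  have htr : Transcendental L t :=
    hφ.transcendental_of_notMem_expInv (algebraMap L D).injective (expInv φ).algebraMap_mem
      (mt hφ.mem_expInv_iff_natDegree_eq_zero.1 ht.ne')
  exact ⟨((algEquivOfTranscendental L t htr).trans <|
    (Subalgebra.equivOfEq _ _ (hφ.adjoin_singleton_eq_top hinv ht hdvd)).trans
      Subalgebra.topEquiv).symm⟩

/-- **Lemma 3.1**: a geometrically integral affine `L`-algebra of transcendence degree one
admitting a non-trivial exponential map is a polynomial ring in one variable over `L`. -/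
theorem geometrically_integral_trdeg_one {L D : Type} [Field L] [CommRing D]
    [Algebra L D] [Algebra.FiniteType L D]
    (hgi : IsDomain (TensorProduct L D (AlgebraicClosure L)))
    (htd : trdeg L D = 1)
    (φ : D →ₐ[L] D[X]) (hφ : IsExponentialMap φ) (hnt : expInv φ ≠ ⊤) :
    Nonempty (D ≃ₐ[L] Polynomial L) :=
  geometrically_integral_trdeg_one_general hgi htd φ hφ hnt
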